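/- Pointwise energy identity relating the Dirichlet-type energies, the least-squares quasi-conformal energy, and the area functional: for every μ ∈ ℂ with |μ| < 1 and all vectors a = (a₁, a₂), b = (b₁, b₂) ∈ ℝ², with P = P(μ) and J = [[0, −1], [1, 0]], one has (1/2)‖P·a‖² + (1/2)‖P·b‖² − (1/2)‖P·a + J·P·b‖² = a₁·b₂ − a₂·b₁. -/

import Mathlib

/-!
Write `x = P a` and `y = P b`. Since `J` is a rotation, `‖x + J y‖² = ‖x‖² + ‖y‖² + 2⟪x, J y⟫`,
so the left-hand side is `-⟪x, J y⟫ = x₁ y₂ - x₂ y₁`, the determinant of the columns `P a, P b`.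
This is `det P · (a₁ b₂ - a₂ b₁)`, and `det P(μ) = (1 - ρ² - τ²) / (1 - |μ|²) = 1`.
-/

/-- The matrix `P(μ)` associated with a Beltrami coefficient `μ = ρ + iτ`. -/
noncomputable def Pmat (μ : ℂ) : Matrix (Fin 2) (Fin 2) ℝ :=
  (1 / Real.sqrt (1 - ‖μ‖ ^ 2)) •
    !![1 - μ.re, -μ.im; -μ.im, 1 + μ.re]

/-- The matrix `J = [[0, −1], [1, 0]]`. -/
def Jmat : Matrix (Fin 2) (Fin 2) ℝ := !![0, -1; 1, 0]

/-- View a vector in `Fin 2 → ℝ` as an element of `ℝ²` with the Euclidean norm. -/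
noncomputable def toE2 (w : Fin 2 → ℝ) : EuclideanSpace ℝ (Fin 2) := WithLp.toLp 2 w

lemma norm_toE2_sq (w : Fin 2 → ℝ) : ‖toE2 w‖ ^ 2 = w 0 ^ 2 + w 1 ^ 2 := by
  rw [toE2, EuclideanSpace.norm_eq, Real.sq_sqrt (by positivity)]
  simp [Fin.sum_univ_two, sq_abs]

lemma Jmat_mulVec (y : Fin 2 → ℝ) : Jmat.mulVec y = ![-y 1, y 0] := by
  ext i
  fin_cases i <;> simp [Jmat, Matrix.mulVec, dotProduct, Fin.sum_univ_two]

lemma half_norm_sq_add_sub_half_norm_sq_add_Jmat (x y : Fin 2 → ℝ) :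
    (1 / 2) * ‖toE2 x‖ ^ 2 + (1 / 2) * ‖toE2 y‖ ^ 2
      - (1 / 2) * ‖toE2 (x + Jmat.mulVec y)‖ ^ 2 = x 0 * y 1 - x 1 * y 0 := by
  simp only [norm_toE2_sq, Pi.add_apply, Jmat_mulVec, Matrix.cons_val_zero, Matrix.cons_val_one]
  ring

lemma Matrix.mulVec_cross_fin_two {R : Type*} [CommRing R] (M : Matrix (Fin 2) (Fin 2) R)
    (a b : Fin 2 → R) :
    M.mulVec a 0 * M.mulVec b 1 - M.mulVec a 1 * M.mulVec b 0
      = M.det * (a 0 * b 1 - a 1 * b 0) := by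
  simp only [Matrix.mulVec, dotProduct, Fin.sum_univ_two, Matrix.det_fin_two]
  ring

lemma det_Pmat {μ : ℂ} (hμ : ‖μ‖ < 1) : (Pmat μ).det = 1 := by
  have hpos : 0 < 1 - ‖μ‖ ^ 2 := by nlinarith [norm_nonneg μ]
  have hsq : Real.sqrt (1 - ‖μ‖ ^ 2) ^ 2 = 1 - μ.re ^ 2 - μ.im ^ 2 := by
    rw [Real.sq_sqrt hpos.le, Complex.sq_norm, Complex.normSq_apply]; ring
  have hne : Real.sqrt (1 - ‖μ‖ ^ 2) ≠ 0 := (Real.sqrt_pos.mpr hpos).ne'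
  rw [Pmat, Matrix.det_smul, Matrix.det_fin_two_of, Fintype.card_fin]
  field_simp
  linear_combination -hsq

/-- Pointwise energy identity relating the Dirichlet-type energies, the least-squares
quasi-conformal energy, and the area functional: for `|μ| < 1`, `P = P(μ)`,
`J = [[0,−1],[1,0]]` and all `a, b ∈ ℝ²`,
`(1/2)‖P·a‖² + (1/2)‖P·b‖² − (1/2)‖P·a + J·P·b‖² = a₁·b₂ − a₂·b₁`
(Euclidean norm on `ℝ²`). -/
theorem pointwise_energy_identity (μ : ℂ) (hμ : ‖μ‖ < 1) (a b : Fin 2 → ℝ) :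
    (1 / 2) * ‖toE2 ((Pmat μ).mulVec a)‖ ^ 2
      + (1 / 2) * ‖toE2 ((Pmat μ).mulVec b)‖ ^ 2
      - (1 / 2) * ‖toE2 ((Pmat μ).mulVec a + Jmat.mulVec ((Pmat μ).mulVec b))‖ ^ 2
      = a 0 * b 1 - a 1 * b 0 := by
  rw [half_norm_sq_add_sub_half_norm_sq_add_Jmat, Matrix.mulVec_cross_fin_two, det_Pmat hμ,
    one_mul]
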